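/- arXiv:1207.6960 — 2 statements merged into one kernel-verified Lean document; each statement's English description precedes it below -/
import Mathlib

section
/- For every class Γ_t with t > 1 and every vertex v_i ∈ Γ_t, the value ℓ(v_i) defined by the placing formula satisfies ℓ'(γ_{t−1}) < ℓ(v_i) ≤ ℓ'(γ_t). -/
/-- A unit interval representation of `G`: distinct vertices are adjacent iff their
points are at distance at most `1`. -/
def IsUIRep {V : Type*} (G : SimpleGraph V) (ℓ : V → ℝ) : Prop :=
  ∀ u v : V, u ≠ v → (G.Adj u v ↔ |ℓ u - ℓ v| ≤ 1)

/-- Two vertices are indistinguishable if they have the same closed neighborhood. -/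
def Indist {V : Type*} (G : SimpleGraph V) (u v : V) : Prop :=
  ∀ w : V, (w = u ∨ G.Adj u w) ↔ (w = v ∨ G.Adj v w)

/-- `GridRep G lt K lbound ℓ`: `ℓ` belongs to `Rep(G, <, ε, lbound)` for `ε = 1/K`,
i.e. it is an `ε`-grid unit interval representation of `G` whose left-to-right order
extends `lt` and which satisfies the lower bounds. -/
def GridRep {V : Type*} (G : SimpleGraph V) (lt : V → V → Prop) (K : ℕ) (lbound : V → ℝ)
    (ℓ : V → ℝ) : Prop :=
  IsUIRep G ℓ ∧ (∀ v : V, ∃ m : ℤ, ℓ v = m * (1 / (K : ℝ))) ∧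
    (∀ u v : V, lt u v → ℓ u ≤ ℓ v) ∧ (∀ v : V, lbound v ≤ ℓ v)

/-- The pruned graph on the indistinguishability classes `Γ 0 < Γ 1 < ⋯ < Γ (k-1)`:
two distinct classes are adjacent iff their vertices are adjacent in `G`. -/
def pruned {V : Type*} (G : SimpleGraph V) {k : ℕ} (Γ : Fin k → Set V) :
    SimpleGraph (Fin k) where
  Adj i j := i ≠ j ∧ ∃ u ∈ Γ i, ∃ w ∈ Γ j, G.Adj u w
  symm := by
    constructor
    rintro i j ⟨hij, u, hu, w, hw, h⟩
    exact ⟨hij.symm, w, hw, u, hu, h.symm⟩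
  loopless := by constructor; rintro i ⟨hii, -⟩; exact hii rfl

/-- `PlacingValue G' K ℓ' lb t x`: `x` is the value assigned by the placing formula
`x = max {lb, ℓ'(γ^t_←) + 1 + ε, ℓ'(γ^t_→) - 1}` to a vertex of the class `Γ t` with
lower bound `lb`, where `γ^t_←` is the largest class preceding `t` and non-adjacent to
`t` (the corresponding term being omitted if no such class exists) and `γ^t_→` is the
largest class adjacent to `t` (possibly `t` itself). -/
def PlacingValue {k : ℕ} (G' : SimpleGraph (Fin k)) (K : ℕ) (ℓ' : Fin k → ℝ)
    (lb : ℝ) (t : Fin k) (x : ℝ) : Prop :=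
  ∃ rA : Fin k, ((rA = t ∨ G'.Adj t rA) ∧ ∀ s : Fin k, (s = t ∨ G'.Adj t s) → s ≤ rA) ∧
    ((∃ lA : Fin k, (lA < t ∧ ¬ G'.Adj lA t ∧ ∀ s : Fin k, s < t → ¬ G'.Adj s t → s ≤ lA) ∧
        x = max (max lb (ℓ' lA + 1 + 1 / (K : ℝ))) (ℓ' rA - 1)) ∨
      ((∀ s : Fin k, s < t → G'.Adj s t) ∧ x = max lb (ℓ' rA - 1)))

/-!
Upper bound: every term of the maximum is at most `ℓ'(γ_t)`. The lower bound of a vertex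
is at most `lbound'(t) ≤ ℓ'(γ_t)`; `γ^t_→` is adjacent to `γ_t`, so it lies at most `1` to
its right; and `γ^t_←` is not adjacent to `γ_t`, so it lies more than `1`, hence on the
`ε`-grid at least `1 + ε`, to its left.

Lower bound: distinct classes of `G` have distinct closed neighbourhoods in the pruned graph,
so some class `w` lies in exactly one of the closed neighbourhoods of `γ_{t-1}` and `γ_t`.
If it is a neighbour of `γ_{t-1}` only, then it lies left of `γ_t`, so
`ℓ'(γ_{t-1}) ≤ ℓ'(w) + 1 ≤ ℓ'(γ^t_←) + 1 < ℓ'(γ^t_←) + 1 + ε`. If it is a neighbour of `γ_t`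
only, then `ℓ'(γ_{t-1}) < ℓ'(w) - 1 ≤ ℓ'(γ^t_→) - 1`.
-/

theorem IsUIRep.eq_or_adj_iff {ι : Type*} {H : SimpleGraph ι} {ℓ : ι → ℝ} (hℓ : IsUIRep H ℓ)
    (u w : ι) :
    (w = u ∨ H.Adj u w) ↔ |ℓ u - ℓ w| ≤ 1 := by
  rcases eq_or_ne w u with rfl | hwu
  · simp
  · simp only [hwu, false_or]
    exact hℓ u w (Ne.symm hwu)

theorem add_one_add_one_div_le_of_add_one_lt {K : ℕ} (hK : 0 < K) {m n : ℤ}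
    (h : m * (1 / (K : ℝ)) + 1 < n * (1 / K)) :
    m * (1 / (K : ℝ)) + 1 + 1 / K ≤ n * (1 / K) := by
  have hKpos : (0 : ℝ) < K := by exact_mod_cast hK
  have hreal : (m : ℝ) + K < n := by
    have := mul_lt_mul_of_pos_right h hKpos
    field_simp at this
    linarith
  have hint : m + K + 1 ≤ n := by exact_mod_cast hreal
  have hcast : (m : ℝ) + K + 1 ≤ n := by exact_mod_cast hint
  calc m * (1 / (K : ℝ)) + 1 + 1 / K = (m + K + 1) * (1 / K) := by field_simp
    _ ≤ n * (1 / K) := by gcongr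

namespace PlacingValue

variable {k K : ℕ} {H : SimpleGraph (Fin k)} {ℓ : Fin k → ℝ} {lb x : ℝ} {t : Fin k}

theorem sub_one_le (hx : PlacingValue H K ℓ lb t x) (hmono : Monotone ℓ) {s : Fin k}
    (hs : s = t ∨ H.Adj t s) : ℓ s - 1 ≤ x := by
  obtain ⟨rA, ⟨-, hrA⟩, hcase⟩ := hx
  have hle : ℓ s - 1 ≤ ℓ rA - 1 := by linarith [hmono (hrA s hs)]
  rcases hcase with ⟨-, -, rfl⟩ | ⟨-, rfl⟩ <;> exact hle.trans (le_max_right _ _)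

theorem add_one_lt (hx : PlacingValue H K ℓ lb t x) (hmono : Monotone ℓ) (hK : 0 < K)
    {w : Fin k} (hwt : w < t) (hnadj : ¬ H.Adj w t) : ℓ w + 1 < x := by
  obtain ⟨-, -, ⟨lA, ⟨-, -, hlA⟩, rfl⟩ | ⟨hall, -⟩⟩ := hx
  · have hKpos : (0 : ℝ) < 1 / K := by positivity
    calc ℓ w + 1 < ℓ lA + 1 + 1 / K := by linarith [hmono (hlA w hwt hnadj)]
      _ ≤ _ := (le_max_right _ _).trans (le_max_left _ _)
  · exact absurd (hall w hwt) hnadj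

theorem lt_of_lt_of_not_indist (hx : PlacingValue H K ℓ lb t x) (hℓ : IsUIRep H ℓ)
    (hmono : Monotone ℓ) (hK : 0 < K) {s : Fin k} (hst : s < t) (hdist : ¬ Indist H s t) :
    ℓ s < x := by
  obtain ⟨w, hw⟩ := not_forall.mp hdist
  rw [hℓ.eq_or_adj_iff, hℓ.eq_or_adj_iff] at hw
  have hℓst := hmono hst.le
  by_cases hsw : |ℓ s - ℓ w| ≤ 1
  · have htw : ¬ |ℓ t - ℓ w| ≤ 1 := fun h => hw (iff_of_true hsw h)
    rw [abs_le] at hsw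
    have hℓwt : ℓ w < ℓ t - 1 := by
      rcases lt_abs.mp (not_le.mp htw) with h | h <;> linarith
    have hwt : w < t := lt_of_not_ge fun h => by linarith [hmono h]
    have hnadj : ¬ H.Adj w t := fun h =>
      htw ((hℓ.eq_or_adj_iff t w).mp (Or.inr h.symm))
    linarith [hx.add_one_lt hmono hK hwt hnadj]
  · have htw : |ℓ t - ℓ w| ≤ 1 := not_not.mp fun h => hw (iff_of_false hsw h)
    have hℓsw : ℓ s + 1 < ℓ w := by
      rw [abs_le] at htw
      rcases lt_abs.mp (not_le.mp hsw) with h | h <;> linarith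
    linarith [hx.sub_one_le hmono ((hℓ.eq_or_adj_iff t w).mpr htw)]

theorem le_of_le (hx : PlacingValue H K ℓ lb t x) (hℓ : IsUIRep H ℓ) (hmono : Monotone ℓ)
    (hgrid : ∀ i, ∃ m : ℤ, ℓ i = m * (1 / (K : ℝ))) (hK : 0 < K) (hlb : lb ≤ ℓ t) :
    x ≤ ℓ t := by
  obtain ⟨rA, ⟨hrA, -⟩, hcase⟩ := hx
  have hright : ℓ rA - 1 ≤ ℓ t := by
    linarith [(abs_le.mp ((hℓ.eq_or_adj_iff t rA).mp hrA)).1]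
  rcases hcase with ⟨lA, ⟨hlAt, hnadj, -⟩, rfl⟩ | ⟨-, rfl⟩
  · have hfar : ℓ lA + 1 < ℓ t := by
      have hnear : ¬ |ℓ t - ℓ lA| ≤ 1 := fun h =>
        ((hℓ.eq_or_adj_iff t lA).mpr h).elim hlAt.ne fun h => hnadj h.symm
      rw [abs_of_nonneg (sub_nonneg.mpr (hmono hlAt.le))] at hnear
      linarith
    have hleft : ℓ lA + 1 + 1 / K ≤ ℓ t := by
      obtain ⟨m, hm⟩ := hgrid lA
      obtain ⟨n, hn⟩ := hgrid t
      rw [hm, hn] at hfar ⊢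
      exact add_one_add_one_div_le_of_add_one_lt hK hfar
    exact max_le (max_le hlb hleft) hright
  · exact max_le hlb hright

end PlacingValue

section Pruned

open Function

variable {V : Type*} {G : SimpleGraph V} {k : ℕ} {Γ : Fin k → Set V} {u v w : V}

theorem Indist.eq_or_adj (h : Indist G u v) : u = v ∨ G.Adj u v :=
  ((h u).mp (Or.inl rfl)).imp_right SimpleGraph.Adj.symm

theorem Indist.adj_of_adj (h : Indist G u v) (huw : G.Adj u w) (hwv : w ≠ v) : G.Adj v w :=
  ((h w).mp (Or.inr huw)).resolve_left hwv

theorem pairwise_disjoint_of_forall_lt {ι : Type*} [LinearOrder ι] {S : ι → Set V}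
    {lt : V → V → Prop} (hirr : ∀ v, ¬ lt v v)
    (horder : ∀ i j, i < j → ∀ u ∈ S i, ∀ v ∈ S j, lt u v) :
    Pairwise (Disjoint on S) := by
  intro i j hij
  refine Set.disjoint_left.mpr fun w hwi hwj => ?_
  rcases hij.lt_or_gt with h | h
  · exact hirr w (horder i j h w hwi w hwj)
  · exact hirr w (horder j i h w hwj w hwi)

theorem eq_of_mem_of_pairwise_disjoint {ι : Type*} {S : ι → Set V}
    (hdisj : Pairwise (Disjoint on S)) {i j : ι} (hi : w ∈ S i) (hj : w ∈ S j) : i = j :=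
  hdisj.eq (Set.not_disjoint_iff.mpr ⟨w, hi, hj⟩)

theorem adj_of_pruned_adj (hclass : ∀ i, ∀ u ∈ Γ i, ∀ v, v ∈ Γ i ↔ Indist G u v)
    (hdisj : Pairwise (Disjoint on Γ)) {i j : Fin k} (hij : (pruned G Γ).Adj i j)
    (hu : u ∈ Γ i) (hw : w ∈ Γ j) : G.Adj u w := by
  obtain ⟨hne, u', hu', w', hw', hadj⟩ := hij
  have huw' : G.Adj u w' := ((hclass i u' hu' u).mp hu).adj_of_adj hadj
    fun h => hne (eq_of_mem_of_pairwise_disjoint hdisj hu (h ▸ hw'))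
  exact (((hclass j w' hw' w).mp hw).adj_of_adj huw'.symm
    fun h => hne (eq_of_mem_of_pairwise_disjoint hdisj (h ▸ hu) hw)).symm

theorem eq_or_adj_iff_pruned (hclass : ∀ i, ∀ u ∈ Γ i, ∀ v, v ∈ Γ i ↔ Indist G u v)
    (hdisj : Pairwise (Disjoint on Γ)) {i s : Fin k} (hu : u ∈ Γ i) (hw : w ∈ Γ s) :
    (w = u ∨ G.Adj u w) ↔ (s = i ∨ (pruned G Γ).Adj i s) := by
  constructor
  · rintro (rfl | hadj)
    · exact Or.inl (eq_of_mem_of_pairwise_disjoint hdisj hw hu)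
    · by_cases hsi : s = i
      · exact Or.inl hsi
      · exact Or.inr ⟨Ne.symm hsi, u, hu, w, hw, hadj⟩
  · rintro (rfl | hadj)
    · exact ((hclass s u hu w).mp hw).eq_or_adj.imp Eq.symm id
    · exact Or.inr (adj_of_pruned_adj hclass hdisj hadj hu hw)

theorem not_indist_pruned (hclass : ∀ i, ∀ u ∈ Γ i, ∀ v, v ∈ Γ i ↔ Indist G u v)
    (hdisj : Pairwise (Disjoint on Γ)) (hne : ∀ i, (Γ i).Nonempty)
    (hcover : ∀ v, ∃ i, v ∈ Γ i) {i j : Fin k} (hij : i ≠ j) :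
    ¬ Indist (pruned G Γ) i j := by
  intro h
  obtain ⟨u, hu⟩ := hne i
  obtain ⟨v, hv⟩ := hne j
  have huv : Indist G u v := fun w => by
    obtain ⟨s, hs⟩ := hcover w
    rw [eq_or_adj_iff_pruned hclass hdisj hu hs, eq_or_adj_iff_pruned hclass hdisj hv hs]
    exact h s
  exact hij (eq_of_mem_of_pairwise_disjoint hdisj ((hclass i u hu v).mpr huv) hv)

end Pruned

theorem stmt11_general {V : Type*} (G : SimpleGraph V)
    (lt : V → V → Prop)
    (hirr : ∀ v : V, ¬ lt v v)
    (K : ℕ) (hK : 0 < K) (lbound : V → ℝ)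
    (k : ℕ) (Γ : Fin k → Set V)
    (hne : ∀ i : Fin k, (Γ i).Nonempty)
    (hcover : ∀ v : V, ∃ i : Fin k, v ∈ Γ i)
    (hclass : ∀ i : Fin k, ∀ u ∈ Γ i, ∀ v : V, v ∈ Γ i ↔ Indist G u v)
    (horder : ∀ i j : Fin k, i < j → ∀ u ∈ Γ i, ∀ v ∈ Γ j, lt u v)
    (lbound' : Fin k → ℝ)
    (hlb' : ∀ i : Fin k, IsGreatest (lbound '' Γ i) (lbound' i))
    (ℓ' : Fin k → ℝ) (hℓ' : GridRep (pruned G Γ) (· < ·) K lbound' ℓ')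
    (t' t : Fin k) (ht : (t' : ℕ) + 1 = (t : ℕ))
    (v : V) (hv : v ∈ Γ t) (x : ℝ)
    (hx : PlacingValue (pruned G Γ) K ℓ' (lbound v) t x) :
    ℓ' t' < x ∧ x ≤ ℓ' t := by
  obtain ⟨hrep, hgrid, hlt, hlb⟩ := hℓ'
  have hmono : Monotone ℓ' := monotone_iff_forall_lt.mpr hlt
  have hdisj := pairwise_disjoint_of_forall_lt hirr horder
  have htt : t' < t := Fin.lt_def.mpr (by omega)
  have hdist := not_indist_pruned hclass hdisj hne hcover htt.ne
  exact ⟨hx.lt_of_lt_of_not_indist hrep hmono hK htt hdist,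
    hx.le_of_le hrep hmono hgrid hK (((hlb' t).2 ⟨v, hv, rfl⟩).trans (hlb t))⟩

/-- for `t > 1`, the placing formula puts every vertex of the class
`Γ t` strictly to the right of `ℓ'(γ_{t-1})` and at most at `ℓ'(γ_t)`. -/
theorem stmt11 {V : Type*} [Fintype V] (G : SimpleGraph V)
    (hconn : G.Connected) (hUI : ∃ ℓ₀ : V → ℝ, IsUIRep G ℓ₀)
    (lt : V → V → Prop)
    (hirr : ∀ v : V, ¬ lt v v)
    (htrans : ∀ a b c : V, lt a b → lt b c → lt a c)
    (hinc : ∀ u v : V, u ≠ v → (Indist G u v ↔ ¬ lt u v ∧ ¬ lt v u))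
    (K : ℕ) (hK : 0 < K) (lbound : V → ℝ)
    (k : ℕ) (Γ : Fin k → Set V)
    (hne : ∀ i : Fin k, (Γ i).Nonempty)
    (hcover : ∀ v : V, ∃ i : Fin k, v ∈ Γ i)
    (hclass : ∀ i : Fin k, ∀ u ∈ Γ i, ∀ v : V, v ∈ Γ i ↔ Indist G u v)
    (horder : ∀ i j : Fin k, i < j → ∀ u ∈ Γ i, ∀ v ∈ Γ j, lt u v)
    (lbound' : Fin k → ℝ)
    (hlb' : ∀ i : Fin k, IsGreatest (lbound '' Γ i) (lbound' i))
    (ℓ' : Fin k → ℝ) (hℓ' : GridRep (pruned G Γ) (· < ·) K lbound' ℓ')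
    (t' t : Fin k) (ht : (t' : ℕ) + 1 = (t : ℕ))
    (v : V) (hv : v ∈ Γ t) (x : ℝ)
    (hx : PlacingValue (pruned G Γ) K ℓ' (lbound v) t x) :
    ℓ' t' < x ∧ x ≤ ℓ' t :=
  stmt11_general G lt hirr K hK lbound k Γ hne hcover hclass horder lbound' hlb' ℓ' hℓ' t' t ht v hv
    x hx
end

section
/- Assume every value of lbound is an integer multiple of ε and that Rep(G', <, ε, lbound) is nonempty, and let ℓ' be its left-most representation (the element that is pointwise minimal). Then the function ℓ on V(G) defined by the placing formula is an ε-grid unit interval representation of G, belongs to Rep(G, <, ε, lbound), and is the left-most representation of Rep(G, <, ε, lbound): ℓ ≤ ℓ'' pointwise for every ℓ'' ∈ Rep(G, <, ε, lbound). -/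
/-!
Each vertex of `Γ t` is placed at the least value respecting its lower bound, lying within
`1` of every class adjacent to `γ_t`, and more than `1` to the right of every earlier class not
adjacent to `γ_t` (`PlacingBound`). Since `ℓ' t` satisfies these constraints, `Γ t` is placed
inside `[ℓ' t - 1, ℓ' t]`; since no two classes are indistinguishable in `G'`, every class `t`
after an adjacent class `s` is placed at or to the right of `ℓ' s`. Together these make the
placement a representation of `G` compatible with `<`. Conversely, restricting any
`ℓ'' ∈ Rep(G, <, ε, lbound)` to vertices realising the class lower bounds gives an element of
`Rep(G', <, ε, lbound)`, which lies above `ℓ'`; so `ℓ'' v` satisfies the constraints of `v`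
and is at least `ℓ v`.
-/

open Function

def OnGrid (K : ℕ) (x : ℝ) : Prop :=
  ∃ m : ℤ, x = m * (1 / (K : ℝ))

namespace OnGrid

variable {K : ℕ} {x y : ℝ}

lemma add (hx : OnGrid K x) (hy : OnGrid K y) : OnGrid K (x + y) := by
  obtain ⟨m, rfl⟩ := hx
  obtain ⟨n, rfl⟩ := hy
  exact ⟨m + n, by push_cast; ring⟩

lemma sub (hx : OnGrid K x) (hy : OnGrid K y) : OnGrid K (x - y) := by
  obtain ⟨m, rfl⟩ := hx
  obtain ⟨n, rfl⟩ := hy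
  exact ⟨m - n, by push_cast; ring⟩

lemma one (hK : K ≠ 0) : OnGrid K 1 :=
  ⟨K, by push_cast; field_simp⟩

lemma inv : OnGrid K (1 / K) :=
  ⟨1, by simp⟩

lemma max (hx : OnGrid K x) (hy : OnGrid K y) : OnGrid K (max x y) := by
  rcases le_total x y with h | h
  · rwa [max_eq_right h]
  · rwa [max_eq_left h]

lemma add_one_add_inv_le (hK : 0 < K) (hx : OnGrid K x) (hy : OnGrid K y) (h : 1 < y - x) :
    x + 1 + 1 / K ≤ y := by
  obtain ⟨m, rfl⟩ := hx
  obtain ⟨n, rfl⟩ := hy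
  have hK' : (0 : ℝ) < K := by exact_mod_cast hK
  have hreal : (K : ℝ) < n - m := by
    have := mul_lt_mul_of_pos_right h hK'
    field_simp at this
    linarith
  have hint : (K : ℤ) + 1 ≤ n - m := by
    have : (K : ℤ) < n - m := by exact_mod_cast hreal
    omega
  have hcast : (K : ℝ) + 1 ≤ n - m := by exact_mod_cast hint
  calc (m : ℝ) * (1 / K) + 1 + 1 / K = (m + K + 1) * (1 / K) := by field_simp
    _ ≤ n * (1 / K) := by gcongr; linarith

end OnGrid

namespace IsUIRep

variable {V : Type*} {G : SimpleGraph V} {ℓ : V → ℝ} {u v : V}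

lemma abs_sub_le (hℓ : IsUIRep G ℓ) (h : G.Adj u v) : |ℓ u - ℓ v| ≤ 1 :=
  (hℓ u v h.ne).1 h

lemma one_lt_sub (hℓ : IsUIRep G ℓ) (huv : u ≠ v) (h : ¬G.Adj u v) (hle : ℓ u ≤ ℓ v) :
    1 < ℓ v - ℓ u := by
  by_contra! h'
  exact h ((hℓ u v huv).2 (abs_le.2 ⟨by linarith, by linarith⟩))

lemma add_one_add_inv_le {K : ℕ} (hℓ : IsUIRep G ℓ) (hK : 0 < K)
    (hgrid : ∀ v, OnGrid K (ℓ v)) (huv : u ≠ v) (h : ¬G.Adj u v) (hle : ℓ u ≤ ℓ v) :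
    ℓ u + 1 + 1 / K ≤ ℓ v :=
  (hgrid u).add_one_add_inv_le hK (hgrid v) (hℓ.one_lt_sub huv h hle)

end IsUIRep

lemma GridRep.monotone {ι : Type*} [PartialOrder ι] {H : SimpleGraph ι} {K : ℕ} {lb ℓ : ι → ℝ}
    (hℓ : GridRep H (· < ·) K lb ℓ) : Monotone ℓ :=
  monotone_iff_forall_lt.2 hℓ.2.2.1

def PlacingBound {k : ℕ} (H : SimpleGraph (Fin k)) (K : ℕ) (ℓ' : Fin k → ℝ) (lb : ℝ)
    (t : Fin k) (y : ℝ) : Prop :=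
  lb ≤ y ∧ (∀ r, (r = t ∨ H.Adj t r) → ℓ' r - 1 ≤ y) ∧
    ∀ s < t, ¬H.Adj s t → ℓ' s + 1 + 1 / (K : ℝ) ≤ y

section Placing

variable {k : ℕ} {H : SimpleGraph (Fin k)} {K : ℕ} {ℓ' lb' : Fin k → ℝ} {lb lb₂ x y : ℝ}
  {s t : Fin k}

lemma PlacingBound.le_of_lt (hrep : IsUIRep H ℓ') (hmono : Monotone ℓ')
    (hred : Pairwise fun i j => ¬Indist H i j) (hy : PlacingBound H K ℓ' lb t y) (hst : s < t) :
    ℓ' s ≤ y := by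
  obtain ⟨-, hR, hL⟩ := hy
  have hε : (0 : ℝ) ≤ 1 / K := by positivity
  by_cases hadj : H.Adj s t
  swap
  · linarith [hL s hst hadj]
  -- some class `r` is adjacent to exactly one of `s`, `t`; in either case it pushes `y` past `ℓ' s`
  obtain ⟨r, hr⟩ := not_forall.1 (hred hst.ne)
  by_cases hrs : r = s ∨ H.Adj s r
  · have hrt : ¬(r = t ∨ H.Adj t r) := fun h => hr (iff_of_true hrs h)
    rw [not_or] at hrt
    have hsr : H.Adj s r := hrs.resolve_left (by rintro rfl; exact hrt.2 hadj.symm)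
    obtain ⟨hsr₁, hsr₂⟩ := abs_le.1 (hrep.abs_sub_le hsr)
    rcases Ne.lt_or_gt hrt.1 with h | h
    · linarith [hL r h fun h' => hrt.2 h'.symm, hsr₂]
    · linarith [hrep.one_lt_sub (Ne.symm hrt.1) hrt.2 (hmono h.le), hmono hst.le, hsr₁]
  · have hrt : r = t ∨ H.Adj t r := by_contra fun h => hr (iff_of_false hrs h)
    rw [not_or] at hrs
    have htr : H.Adj t r := hrt.resolve_left (by rintro rfl; exact hrs.2 hadj)
    rcases Ne.lt_or_gt hrs.1 with h | h
    · linarith [hrep.one_lt_sub h.ne (fun h' => hrs.2 h'.symm) (hmono h.le), hmono hst.le,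
        (abs_le.1 (hrep.abs_sub_le htr)).2]
    · linarith [hrep.one_lt_sub h.ne hrs.2 (hmono h.le), hR r (Or.inr htr)]

lemma GridRep.placingBound_self (hK : 0 < K) (hℓ' : GridRep H (· < ·) K lb' ℓ')
    (hlb : lb ≤ lb' t) : PlacingBound H K ℓ' lb t (ℓ' t) := by
  obtain ⟨hrep, hgrid, hmono, hlb'⟩ := hℓ'
  refine ⟨hlb.trans (hlb' t), ?_, fun s hst hna =>
    hrep.add_one_add_inv_le hK hgrid hst.ne hna (hmono s t hst)⟩
  rintro r (rfl | hadj)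
  · linarith
  · linarith [(abs_le.1 (hrep.abs_sub_le hadj)).1]

namespace PlacingValue

lemma isLeast (hmono : Monotone ℓ') (h : PlacingValue H K ℓ' lb t x) :
    IsLeast {y | PlacingBound H K ℓ' lb t y} x := by
  obtain ⟨rA, ⟨hrAt, hrA⟩, ⟨lA, ⟨hlAt, hlAna, hlA⟩, rfl⟩ | ⟨hall, rfl⟩⟩ := h
  · refine ⟨⟨le_max_of_le_left (le_max_left _ _), fun r hr => ?_, fun s hs hna => ?_⟩,
      fun y ⟨hlb, hR, hL⟩ => max_le (max_le hlb (hL lA hlAt hlAna)) (hR rA hrAt)⟩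
    · exact le_max_of_le_right (by linarith [hmono (hrA r hr)])
    · exact le_max_of_le_left (le_max_of_le_right (by linarith [hmono (hlA s hs hna)]))
  · exact ⟨⟨le_max_left _ _, fun r hr => le_max_of_le_right (by linarith [hmono (hrA r hr)]),
      fun s hs hna => absurd (hall s hs) hna⟩, fun y ⟨hlb, hR, _⟩ => max_le hlb (hR rA hrAt)⟩

lemma onGrid (hK : K ≠ 0) (hℓ' : ∀ i, OnGrid K (ℓ' i)) (hlb : OnGrid K lb)
    (h : PlacingValue H K ℓ' lb t x) : OnGrid K x := by
  obtain ⟨rA, -, ⟨lA, -, rfl⟩ | ⟨-, rfl⟩⟩ := h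
  · exact (hlb.max (((hℓ' lA).add (.one hK)).add .inv)).max ((hℓ' rA).sub (.one hK))
  · exact hlb.max ((hℓ' rA).sub (.one hK))

lemma le_self (hK : 0 < K) (hℓ' : GridRep H (· < ·) K lb' ℓ') (hlb : lb ≤ lb' t)
    (h : PlacingValue H K ℓ' lb t x) : x ≤ ℓ' t :=
  (h.isLeast hℓ'.monotone).2 (hℓ'.placingBound_self hK hlb)

lemma le_of_lt (hℓ' : GridRep H (· < ·) K lb' ℓ') (hred : Pairwise fun i j => ¬Indist H i j)
    (h : PlacingValue H K ℓ' lb t x) (hst : s < t) : ℓ' s ≤ x :=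
  (h.isLeast hℓ'.monotone).1.le_of_lt hℓ'.1 hℓ'.monotone hred hst

lemma abs_sub_le (hK : 0 < K) (hℓ' : GridRep H (· < ·) K lb' ℓ')
    (hx : PlacingValue H K ℓ' lb t x) (hy : PlacingValue H K ℓ' lb₂ t y)
    (hlb : lb ≤ lb' t) (hlb₂ : lb₂ ≤ lb' t) : |x - y| ≤ 1 := by
  have hx₁ := (hx.isLeast hℓ'.monotone).1.2.1 t (Or.inl rfl)
  have hy₁ := (hy.isLeast hℓ'.monotone).1.2.1 t (Or.inl rfl)
  have hx₂ := hx.le_self hK hℓ' hlb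
  have hy₂ := hy.le_self hK hℓ' hlb₂
  rw [abs_le]
  constructor <;> linarith

lemma adj_iff (hK : 0 < K) (hℓ' : GridRep H (· < ·) K lb' ℓ')
    (hred : Pairwise fun i j => ¬Indist H i j)
    (hx : PlacingValue H K ℓ' lb s x) (hy : PlacingValue H K ℓ' lb₂ t y)
    (hlb : lb ≤ lb' s) (hlb₂ : lb₂ ≤ lb' t) (hst : s < t) : H.Adj s t ↔ |x - y| ≤ 1 := by
  have hxs := hx.le_self hK hℓ' hlb
  have hsy := hy.le_of_lt hℓ' hred hst
  constructor
  · intro hadj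
    have hxt := (hx.isLeast hℓ'.monotone).1.2.1 t (Or.inr hadj)
    have hyt := hy.le_self hK hℓ' hlb₂
    rw [abs_le]
    constructor <;> linarith
  · intro habs
    by_contra hna
    have hsy' := (hy.isLeast hℓ'.monotone).1.2.2 s hst hna
    have hε : (0 : ℝ) < 1 / K := by positivity
    linarith [(abs_le.1 habs).1]

end PlacingValue

end Placing

structure IsIndistPartition {V : Type*} (G : SimpleGraph V) {k : ℕ} (Γ : Fin k → Set V) :
    Prop where
  pairwise_disjoint : Pairwise (Disjoint on Γ)
  mem_iff_indist : ∀ i, ∀ u ∈ Γ i, ∀ v, v ∈ Γ i ↔ Indist G u v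
  exists_mem : ∀ v, ∃ i, v ∈ Γ i
  nonempty : ∀ i, (Γ i).Nonempty

namespace IsIndistPartition

variable {V : Type*} {G : SimpleGraph V} {k : ℕ} {Γ : Fin k → Set V} {i j r t : Fin k}
  {u u' v w x : V}

lemma notMem_of_mem (hP : IsIndistPartition G Γ) (hij : i ≠ j) (hu : u ∈ Γ i) : u ∉ Γ j :=
  Set.disjoint_left.1 (hP.pairwise_disjoint hij) hu

lemma adj_of_mem (hP : IsIndistPartition G Γ) (hu : u ∈ Γ i) (hv : v ∈ Γ i) (huv : u ≠ v) :
    G.Adj u v :=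
  ((((hP.mem_iff_indist i u hu v).1 hv u).1 (Or.inl rfl)).resolve_left huv).symm

lemma adj_of_adj_of_mem (hP : IsIndistPartition G Γ) (h : G.Adj u w) (hu : u ∈ Γ i)
    (hu' : u' ∈ Γ i) (hw : w ∉ Γ i) : G.Adj u' w :=
  (((hP.mem_iff_indist i u hu u').1 hu' w).1 (Or.inr h)).resolve_left
    (by rintro rfl; exact hw hu')

lemma pruned_adj_iff (hP : IsIndistPartition G Γ) (hij : i ≠ j) (hu : u ∈ Γ i) (hv : v ∈ Γ j) :
    (pruned G Γ).Adj i j ↔ G.Adj u v := by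
  refine ⟨fun ⟨_, u₀, hu₀, v₀, hv₀, h⟩ => ?_, fun h => ⟨hij, u, hu, v, hv, h⟩⟩
  have h' := hP.adj_of_adj_of_mem h hu₀ hu (hP.notMem_of_mem hij.symm hv₀)
  exact (hP.adj_of_adj_of_mem h'.symm hv₀ hv (hP.notMem_of_mem hij hu)).symm

lemma closedNbhd_iff (hP : IsIndistPartition G Γ) (hu : u ∈ Γ i) (hx : x ∈ Γ r) :
    (x = u ∨ G.Adj u x) ↔ (r = i ∨ (pruned G Γ).Adj i r) := by
  by_cases hri : r = i
  · subst hri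
    refine iff_of_true ?_ (Or.inl rfl)
    by_cases hxu : x = u
    exacts [Or.inl hxu, Or.inr (hP.adj_of_mem hu hx (Ne.symm hxu))]
  · have hxu : x ≠ u := by rintro rfl; exact hP.notMem_of_mem hri hx hu
    simp only [hxu, hri, false_or]
    exact (hP.pruned_adj_iff (Ne.symm hri) hu hx).symm

lemma pairwise_not_indist_pruned (hP : IsIndistPartition G Γ) :
    Pairwise fun i j => ¬Indist (pruned G Γ) i j := by
  intro i j hij h
  obtain ⟨u, hu⟩ := hP.nonempty i
  obtain ⟨v, hv⟩ := hP.nonempty j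
  have huv : ¬Indist G u v := fun h' =>
    hP.notMem_of_mem hij.symm hv ((hP.mem_iff_indist i u hu v).2 h')
  obtain ⟨x, hx⟩ := not_forall.1 huv
  obtain ⟨r, hr⟩ := hP.exists_mem x
  exact hx ((hP.closedNbhd_iff hu hr).trans ((h r).trans (hP.closedNbhd_iff hv hr).symm))

lemma index_lt_of_lt {lt : V → V → Prop} (hP : IsIndistPartition G Γ)
    (hirr : ∀ v : V, ¬ lt v v) (htrans : ∀ a b c : V, lt a b → lt b c → lt a c)
    (hinc : ∀ u v : V, u ≠ v → (Indist G u v ↔ ¬ lt u v ∧ ¬ lt v u))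
    (horder : ∀ i j : Fin k, i < j → ∀ u ∈ Γ i, ∀ v ∈ Γ j, lt u v)
    (huv : lt u v) (hu : u ∈ Γ i) (hv : v ∈ Γ j) : i < j := by
  rcases lt_trichotomy i j with h | rfl | h
  · exact h
  · have hne : u ≠ v := by rintro rfl; exact hirr u huv
    exact absurd huv ((hinc u v hne).1 ((hP.mem_iff_indist i u hu v).1 hv)).1
  · exact absurd (htrans u v u huv (horder j i h v hv u hu)) (hirr u)

variable {K : ℕ} {lt : V → V → Prop} {lbound ℓ : V → ℝ} {lbound' ℓ' : Fin k → ℝ} {z : Fin k → V}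

lemma isUIRep_of_placingValue (hP : IsIndistPartition G Γ) (hK : 0 < K)
    (hℓ' : GridRep (pruned G Γ) (· < ·) K lbound' ℓ')
    (hlb : ∀ t, ∀ v ∈ Γ t, lbound v ≤ lbound' t)
    (hplace : ∀ t, ∀ v ∈ Γ t, PlacingValue (pruned G Γ) K ℓ' (lbound v) t (ℓ v)) :
    IsUIRep G ℓ := by
  have key : ∀ i j, i < j → ∀ u ∈ Γ i, ∀ v ∈ Γ j, (G.Adj u v ↔ |ℓ u - ℓ v| ≤ 1) :=
    fun i j hij u hu v hv => (hP.pruned_adj_iff hij.ne hu hv).symm.trans <|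
      (hplace i u hu).adj_iff hK hℓ' hP.pairwise_not_indist_pruned (hplace j v hv)
        (hlb i u hu) (hlb j v hv) hij
  intro u v huv
  obtain ⟨i, hu⟩ := hP.exists_mem u
  obtain ⟨j, hv⟩ := hP.exists_mem v
  rcases lt_trichotomy i j with h | rfl | h
  · exact key i j h u hu v hv
  · exact iff_of_true (hP.adj_of_mem hu hv huv)
      ((hplace i u hu).abs_sub_le hK hℓ' (hplace i v hv) (hlb i u hu) (hlb i v hv))
  · rw [G.adj_comm, abs_sub_comm]
    exact key j i h v hv u hu

lemma gridRep_pruned_comp (hP : IsIndistPartition G Γ)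
    (horder : ∀ i j : Fin k, i < j → ∀ u ∈ Γ i, ∀ v ∈ Γ j, lt u v)
    (hℓ : GridRep G lt K lbound ℓ) (hz : ∀ i, z i ∈ Γ i)
    (hzlb : ∀ i, lbound' i ≤ lbound (z i)) :
    GridRep (pruned G Γ) (· < ·) K lbound' (ℓ ∘ z) := by
  obtain ⟨hrep, hgrid, hmono, hlb⟩ := hℓ
  refine ⟨fun i j hij => ?_, fun i => hgrid (z i),
    fun i j hij => hmono _ _ (horder i j hij _ (hz i) _ (hz j)),
    fun i => (hzlb i).trans (hlb (z i))⟩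
  have hz' : z i ≠ z j := fun h => hP.notMem_of_mem hij (hz i) (h ▸ hz j)
  exact (hP.pruned_adj_iff hij (hz i) (hz j)).trans (hrep _ _ hz')

lemma placingBound_of_gridRep (hP : IsIndistPartition G Γ)
    (horder : ∀ i j : Fin k, i < j → ∀ u ∈ Γ i, ∀ v ∈ Γ j, lt u v) (hK : 0 < K)
    (hℓ : GridRep G lt K lbound ℓ) (hz : ∀ i, z i ∈ Γ i) (hle : ∀ i, ℓ' i ≤ ℓ (z i))
    (hv : v ∈ Γ t) : PlacingBound (pruned G Γ) K ℓ' (lbound v) t (ℓ v) := by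
  obtain ⟨hrep, hgrid, hmono, hlb⟩ := hℓ
  refine ⟨hlb v, fun r hr => ?_, fun s hst hna => ?_⟩
  · rcases (hP.closedNbhd_iff hv (hz r)).2 hr with h | h
    · rw [← h]
      linarith [hle r]
    · linarith [hle r, (abs_le.1 (hrep.abs_sub_le h)).1]
  · have hzs : z s ≠ v := fun h => hP.notMem_of_mem hst.ne (hz s) (h ▸ hv)
    have hgap := hrep.add_one_add_inv_le hK hgrid hzs
      ((hP.pruned_adj_iff hst.ne (hz s) hv).not.1 hna)
      (hmono _ _ (horder s t hst _ (hz s) _ hv))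
    linarith [hle s]

end IsIndistPartition

theorem stmt12_general {V : Type*} (G : SimpleGraph V)
    (lt : V → V → Prop)
    (hirr : ∀ v : V, ¬ lt v v)
    (htrans : ∀ a b c : V, lt a b → lt b c → lt a c)
    (hinc : ∀ u v : V, u ≠ v → (Indist G u v ↔ ¬ lt u v ∧ ¬ lt v u))
    (K : ℕ) (hK : 0 < K) (lbound : V → ℝ)
    (k : ℕ) (Γ : Fin k → Set V)
    (hcover : ∀ v : V, ∃ i : Fin k, v ∈ Γ i)
    (hclass : ∀ i : Fin k, ∀ u ∈ Γ i, ∀ v : V, v ∈ Γ i ↔ Indist G u v)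
    (horder : ∀ i j : Fin k, i < j → ∀ u ∈ Γ i, ∀ v ∈ Γ j, lt u v)
    (lbound' : Fin k → ℝ)
    (hlb' : ∀ i : Fin k, IsGreatest (lbound '' Γ i) (lbound' i))
    (hgridlb : ∀ v : V, ∃ m : ℤ, lbound v = m * (1 / (K : ℝ)))
    (ℓ' : Fin k → ℝ) (hℓ' : GridRep (pruned G Γ) (· < ·) K lbound' ℓ')
    (hmin' : ∀ ℓ'' : Fin k → ℝ, GridRep (pruned G Γ) (· < ·) K lbound' ℓ'' →
      ∀ i : Fin k, ℓ' i ≤ ℓ'' i)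
    (ℓ : V → ℝ)
    (hplace : ∀ t : Fin k, ∀ v ∈ Γ t, PlacingValue (pruned G Γ) K ℓ' (lbound v) t (ℓ v)) :
    GridRep G lt K lbound ℓ ∧
      ∀ ℓ'' : V → ℝ, GridRep G lt K lbound ℓ'' → ∀ v : V, ℓ v ≤ ℓ'' v := by
  choose z hz hzlb using fun i => (hlb' i).1
  have hP : IsIndistPartition G Γ :=
    { pairwise_disjoint := fun i j hij => Set.disjoint_left.2 fun v hvi hvj => by
        rcases hij.lt_or_gt with h | h
        exacts [hirr v (horder i j h v hvi v hvj), hirr v (horder j i h v hvj v hvi)]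
      mem_iff_indist := hclass
      exists_mem := hcover
      nonempty := fun i => ⟨z i, hz i⟩ }
  have hlb : ∀ t, ∀ v ∈ Γ t, lbound v ≤ lbound' t := fun t v hv => (hlb' t).2 ⟨v, hv, rfl⟩
  have hleast : ∀ t, ∀ v ∈ Γ t,
      IsLeast {y | PlacingBound (pruned G Γ) K ℓ' (lbound v) t y} (ℓ v) :=
    fun t v hv => (hplace t v hv).isLeast hℓ'.monotone
  refine ⟨⟨hP.isUIRep_of_placingValue hK hℓ' hlb hplace, fun v => ?_, fun u v huv => ?_,
    fun v => ?_⟩, fun ℓ'' hℓ'' v => ?_⟩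
  all_goals obtain ⟨t, hv⟩ := hcover v
  · exact (hplace t v hv).onGrid hK.ne' hℓ'.2.1 (hgridlb v)
  · obtain ⟨s, hu⟩ := hcover u
    have hst := hP.index_lt_of_lt hirr htrans hinc horder huv hu hv
    exact ((hplace s u hu).le_self hK hℓ' (hlb s u hu)).trans
      ((hplace t v hv).le_of_lt hℓ' hP.pairwise_not_indist_pruned hst)
  · exact (hleast t v hv).1.1
  · have hle := hmin' _ (hP.gridRep_pruned_comp horder hℓ'' hz fun i => (hzlb i).ge)
    exact (hleast t v hv).2 (hP.placingBound_of_gridRep horder hK hℓ'' hz hle hv)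

/-- if all lower bounds lie on the `ε`-grid and `ℓ'` is the left-most
representation of the pruned graph, then the placing formula yields the left-most
representation of `Rep(G, <, ε, lbound)`. -/
theorem stmt12 {V : Type*} [Fintype V] (G : SimpleGraph V)
    (hconn : G.Connected) (hUI : ∃ ℓ₀ : V → ℝ, IsUIRep G ℓ₀)
    (lt : V → V → Prop)
    (hirr : ∀ v : V, ¬ lt v v)
    (htrans : ∀ a b c : V, lt a b → lt b c → lt a c)
    (hinc : ∀ u v : V, u ≠ v → (Indist G u v ↔ ¬ lt u v ∧ ¬ lt v u))
    (K : ℕ) (hK : 0 < K) (lbound : V → ℝ)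
    (k : ℕ) (Γ : Fin k → Set V)
    (hne : ∀ i : Fin k, (Γ i).Nonempty)
    (hcover : ∀ v : V, ∃ i : Fin k, v ∈ Γ i)
    (hclass : ∀ i : Fin k, ∀ u ∈ Γ i, ∀ v : V, v ∈ Γ i ↔ Indist G u v)
    (horder : ∀ i j : Fin k, i < j → ∀ u ∈ Γ i, ∀ v ∈ Γ j, lt u v)
    (lbound' : Fin k → ℝ)
    (hlb' : ∀ i : Fin k, IsGreatest (lbound '' Γ i) (lbound' i))
    (hgridlb : ∀ v : V, ∃ m : ℤ, lbound v = m * (1 / (K : ℝ)))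
    (ℓ' : Fin k → ℝ) (hℓ' : GridRep (pruned G Γ) (· < ·) K lbound' ℓ')
    (hmin' : ∀ ℓ'' : Fin k → ℝ, GridRep (pruned G Γ) (· < ·) K lbound' ℓ'' →
      ∀ i : Fin k, ℓ' i ≤ ℓ'' i)
    (ℓ : V → ℝ)
    (hplace : ∀ t : Fin k, ∀ v ∈ Γ t, PlacingValue (pruned G Γ) K ℓ' (lbound v) t (ℓ v)) :
    GridRep G lt K lbound ℓ ∧
      ∀ ℓ'' : V → ℝ, GridRep G lt K lbound ℓ'' → ∀ v : V, ℓ v ≤ ℓ'' v :=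
  stmt12_general G lt hirr htrans hinc K hK lbound k Γ hcover hclass horder lbound' hlb' hgridlb ℓ'
    hℓ' hmin' ℓ hplace
end
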